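/- arXiv:1511.08369 — 6 statements merged into one kernel-verified Lean document; each statement's English description precedes it below -/
import Mathlib

section
/- Computation of the second-order term for discrete covariates: define the second-order gradient D⁽²⁾(P)((w₁,a₁,y₁),(w₂,a₂,y₂)) := 2·a₁·𝟙{w₁ = w₂} / (g(w₁)·q_W(w₁)) · (1 − a₂/g(w₁)) · (y₁ − Q̄(w₁)). Then the expectation of D⁽²⁾(P) under the product measure P₀ × P₀, for two independent observations O₁, O₂ ~ P₀, equals 2 ∑_w q₀(w)² · g₀(w) · (1 − g₀(w)/g(w)) · (Q̄₀(w) − Q̄(w)) / (g(w) · q_W(w)). -/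
/-!
Only pairs of observations with the same covariate value contribute, and for such a pair the
kernel factors into a function of the first observation times a function of the second.
Summing out each factor against the observed-data law is a conditional moment at fixed `w`:
`E[A (Y - Q̄(W)) ; W = w] = q₀ g₀ (Q̄₀ - Q̄)` and `E[1 - A / g(W) ; W = w] = q₀ (1 - g₀ / g)`.
-/

open Finset

theorem sum_sum_eq_sum_of_fst_ne {W X M : Type*} [Fintype W] [Fintype X] [AddCommMonoid M]
    (F : W × X → W × X → M) (hF : ∀ o₁ o₂, o₁.1 ≠ o₂.1 → F o₁ o₂ = 0) :
    ∑ o₁, ∑ o₂, F o₁ o₂ = ∑ w, ∑ x₁, ∑ x₂, F (w, x₁) (w, x₂) := by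
  rw [Fintype.sum_prod_type]
  refine sum_congr rfl fun w _ => sum_congr rfl fun x₁ _ => ?_
  rw [Fintype.sum_prod_type, sum_eq_single w]
  · exact fun w₂ _ hne => sum_eq_zero fun x₂ _ => hF _ (w₂, x₂) hne.symm
  · simp

section ObservedData

variable {W : Type*} (q₀ g₀ Qbar0 : W → ℝ)

/-- The law `P₀` of `(W, A, Y)`, with `A` and `Y` encoded in `Fin 2`. -/
def obsPMF (o : W × Fin 2 × Fin 2) : ℝ :=
  q₀ o.1 * (((o.2.1 : ℕ) : ℝ) * g₀ o.1 * Qbar0 o.1 ^ ((o.2.2 : ℕ))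
      * (1 - Qbar0 o.1) ^ (1 - (o.2.2 : ℕ))
    + (1 - ((o.2.1 : ℕ) : ℝ)) * (1 - g₀ o.1) * (if (o.2.2 : ℕ) = 0 then (1 : ℝ) else 0))

theorem sum_obsPMF_mul (w : W) (f : Fin 2 × Fin 2 → ℝ) :
    ∑ x, obsPMF q₀ g₀ Qbar0 (w, x) * f x =
      q₀ w * ((1 - g₀ w) * f (0, 0) + g₀ w * ((1 - Qbar0 w) * f (1, 0) + Qbar0 w * f (1, 1))) := by
  simp only [obsPMF, Fintype.sum_prod_type, Fin.sum_univ_two, Fin.val_zero, Fin.val_one,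
    Nat.cast_zero, Nat.cast_one, pow_zero, pow_one, Nat.sub_zero, Nat.sub_self, one_ne_zero,
    if_true, if_false]
  ring

theorem sum_obsPMF_mul_one_sub_mul (w : W) (r : ℝ) :
    ∑ x : Fin 2 × Fin 2, obsPMF q₀ g₀ Qbar0 (w, x) * (1 - ((x.1 : ℕ) : ℝ) * r) =
      q₀ w * (1 - g₀ w * r) := by
  rw [sum_obsPMF_mul]
  simp only [Fin.val_zero, Fin.val_one, Nat.cast_zero, Nat.cast_one]
  ring

theorem sum_obsPMF_mul_mul_sub (w : W) (c : ℝ) :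
    ∑ x : Fin 2 × Fin 2, obsPMF q₀ g₀ Qbar0 (w, x) * (((x.1 : ℕ) : ℝ) * (((x.2 : ℕ) : ℝ) - c)) =
      q₀ w * g₀ w * (Qbar0 w - c) := by
  rw [sum_obsPMF_mul]
  simp only [Fin.val_zero, Fin.val_one, Nat.cast_zero, Nat.cast_one]
  ring

end ObservedData

theorem second_order_term_discrete_general
    {W : Type*} [Fintype W] [DecidableEq W]
    (q₀ qW g₀ g Qbar0 Qbar : W → ℝ)
    (p : W × Fin 2 × Fin 2 → ℝ)
    (hp : ∀ o : W × Fin 2 × Fin 2,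
      p o = q₀ o.1 * (((o.2.1 : ℕ) : ℝ) * g₀ o.1 * Qbar0 o.1 ^ ((o.2.2 : ℕ))
              * (1 - Qbar0 o.1) ^ (1 - (o.2.2 : ℕ))
            + (1 - ((o.2.1 : ℕ) : ℝ)) * (1 - g₀ o.1)
              * (if (o.2.2 : ℕ) = 0 then (1 : ℝ) else 0)))
    (D2 : (W × Fin 2 × Fin 2) → (W × Fin 2 × Fin 2) → ℝ)
    (hD2 : ∀ o₁ o₂ : W × Fin 2 × Fin 2,
      D2 o₁ o₂ = 2 * ((o₁.2.1 : ℕ) : ℝ) * (if o₁.1 = o₂.1 then (1 : ℝ) else 0)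
          / (g o₁.1 * qW o₁.1) * (1 - ((o₂.2.1 : ℕ) : ℝ) / g o₁.1)
          * (((o₁.2.2 : ℕ) : ℝ) - Qbar o₁.1)) :
    ∑ o₁ : W × Fin 2 × Fin 2, ∑ o₂ : W × Fin 2 × Fin 2, p o₁ * p o₂ * D2 o₁ o₂ =
      2 * ∑ w, q₀ w ^ 2 * g₀ w * (1 - g₀ w / g w) * (Qbar0 w - Qbar w)
        / (g w * qW w) := by
  have hp_eq : p = obsPMF q₀ g₀ Qbar0 := funext hp
  have h_off_diag : ∀ o₁ o₂ : W × Fin 2 × Fin 2, o₁.1 ≠ o₂.1 → p o₁ * p o₂ * D2 o₁ o₂ = 0 :=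
    fun o₁ o₂ hne => by simp [hD2, hne]
  have h_diag_factor : ∀ w x₁ x₂, p (w, x₁) * p (w, x₂) * D2 (w, x₁) (w, x₂) =
      2 / (g w * qW w) * ((p (w, x₁) * (((x₁.1 : ℕ) : ℝ) * (((x₁.2 : ℕ) : ℝ) - Qbar w)))
        * (p (w, x₂) * (1 - ((x₂.1 : ℕ) : ℝ) * (g w)⁻¹))) := fun w x₁ x₂ => by
    simp only [hD2, if_true]
    ring
  calc ∑ o₁, ∑ o₂, p o₁ * p o₂ * D2 o₁ o₂
      = ∑ w, 2 / (g w * qW w)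
          * (∑ x₁, p (w, x₁) * (((x₁.1 : ℕ) : ℝ) * (((x₁.2 : ℕ) : ℝ) - Qbar w)))
          * ∑ x₂, p (w, x₂) * (1 - ((x₂.1 : ℕ) : ℝ) * (g w)⁻¹) := by
        simp_rw [sum_sum_eq_sum_of_fst_ne _ h_off_diag, h_diag_factor, mul_assoc _ (∑ _, _),
          sum_mul_sum, mul_sum]
    _ = 2 * ∑ w, q₀ w ^ 2 * g₀ w * (1 - g₀ w / g w) * (Qbar0 w - Qbar w) / (g w * qW w) := by
        simp_rw [hp_eq, sum_obsPMF_mul_mul_sub, sum_obsPMF_mul_one_sub_mul, mul_sum]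
        refine sum_congr rfl fun w _ => ?_
        ring

/-- **Computation of the second-order term for discrete covariates.**
`W` finite, observed data `O = (w,a,y) ∈ W × {0,1} × {0,1}` with law
`P₀(w,a,y) = q₀(w)·[a·g₀(w)·Qbar0(w)^y·(1−Qbar0(w))^{1−y} + (1−a)·(1−g₀(w))·𝟙{y=0}]`.
With second-order gradient
`D⁽²⁾((w₁,a₁,y₁),(w₂,a₂,y₂)) = 2·a₁·𝟙{w₁=w₂}/(g(w₁)·qW(w₁))·(1 − a₂/g(w₁))·(y₁ − Qbar(w₁))`,
its expectation under `P₀ × P₀` equals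
`2 ∑_w q₀(w)²·g₀(w)·(1 − g₀(w)/g(w))·(Qbar0(w) − Qbar(w))/(g(w)·qW(w))`. -/
theorem second_order_term_discrete
    {W : Type*} [Fintype W] [DecidableEq W]
    (q₀ qW g₀ g Qbar0 Qbar : W → ℝ)
    (hq₀pos : ∀ w, 0 < q₀ w) (hq₀sum : ∑ w, q₀ w = 1)
    (hqWpos : ∀ w, 0 < qW w) (hqWsum : ∑ w, qW w = 1)
    (hg₀0 : ∀ w, 0 ≤ g₀ w) (hg₀1 : ∀ w, g₀ w ≤ 1)
    (hQbar00 : ∀ w, 0 ≤ Qbar0 w) (hQbar01 : ∀ w, Qbar0 w ≤ 1)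
    (hgpos : ∀ w, 0 < g w) (hg1 : ∀ w, g w ≤ 1)
    (p : W × Fin 2 × Fin 2 → ℝ)
    (hp : ∀ o : W × Fin 2 × Fin 2,
      p o = q₀ o.1 * (((o.2.1 : ℕ) : ℝ) * g₀ o.1 * Qbar0 o.1 ^ ((o.2.2 : ℕ))
              * (1 - Qbar0 o.1) ^ (1 - (o.2.2 : ℕ))
            + (1 - ((o.2.1 : ℕ) : ℝ)) * (1 - g₀ o.1)
              * (if (o.2.2 : ℕ) = 0 then (1 : ℝ) else 0)))
    (D2 : (W × Fin 2 × Fin 2) → (W × Fin 2 × Fin 2) → ℝ)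
    (hD2 : ∀ o₁ o₂ : W × Fin 2 × Fin 2,
      D2 o₁ o₂ = 2 * ((o₁.2.1 : ℕ) : ℝ) * (if o₁.1 = o₂.1 then (1 : ℝ) else 0)
          / (g o₁.1 * qW o₁.1) * (1 - ((o₂.2.1 : ℕ) : ℝ) / g o₁.1)
          * (((o₁.2.2 : ℕ) : ℝ) - Qbar o₁.1)) :
    ∑ o₁ : W × Fin 2 × Fin 2, ∑ o₂ : W × Fin 2 × Fin 2, p o₁ * p o₂ * D2 o₁ o₂ =
      2 * ∑ w, q₀ w ^ 2 * g₀ w * (1 - g₀ w / g w) * (Qbar0 w - Qbar w)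
        / (g w * qW w) :=
  second_order_term_discrete_general q₀ qW g₀ g Qbar0 Qbar p hp D2 hD2
end

section
/- Second-order expansion of the mean-outcome functional for discrete covariates: define Ψ(Q) := ∑_w q_W(w)·Q̄(w), ψ₀ := ∑_w q₀(w)·Q̄₀(w), D⁽¹⁾(P)(w,a,y) := (a/g(w))·(y − Q̄(w)) + Q̄(w) − Ψ(Q), D⁽²⁾(P)((w₁,a₁,y₁),(w₂,a₂,y₂)) := 2·a₁·𝟙{w₁ = w₂}/(g(w₁)·q_W(w₁))·(1 − a₂/g(w₁))·(y₁ − Q̄(w₁)), and the third-order remainder R₃(P,P₀) := ∑_w q₀(w)·(1 − g₀(w)q₀(w)/(g(w)q_W(w)))·(1 − g₀(w)/g(w))·(Q̄(w) − Q̄₀(w)). Then Ψ(Q) − ψ₀ = −E_{P₀}[D⁽¹⁾(P)(O)] − (1/2)·E_{P₀×P₀}[D⁽²⁾(P)(O₁,O₂)] + R₃(P,P₀). -/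
/-!
Conditioning on the covariate turns every expectation into a sum over `w` of `q₀ w` times a
polynomial in `g₀ w`, `Qbar0 w`, `(g w)⁻¹` and `(g w * qW w)⁻¹`. The first-order term contributes
`q₀ (g₀/g (Q̄₀ - Q̄) + Q̄) - Ψ`; the kernel `D⁽²⁾` only sees pairs with equal covariate and
contributes `2 q₀² g₀/(g qW) (1 - g₀/g) (Q̄₀ - Q̄)`, which cancels the part of `R₃` carrying
`q₀/(g qW)`. What remains in each fibre is `Q̄₀ = g₀/g (Q̄₀ - Q̄) + Q̄ + (1 - g₀/g) (Q̄₀ - Q̄)`.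
-/

open Finset

section MissingOutcome

variable {K : Type*} [Field K] {W : Type*} [Fintype W]

theorem Fintype.sum_prod_fin_two_fin_two {M : Type*} [AddCommMonoid M]
    (f : W × Fin 2 × Fin 2 → M) :
    ∑ o, f o = ∑ w, (f (w, 0, 0) + f (w, 0, 1) + (f (w, 1, 0) + f (w, 1, 1))) := by
  simp only [Fintype.sum_prod_type, Fin.sum_univ_two]

def missingOutcomeLaw (q₀ g₀ Qbar0 : W → K) (o : W × Fin 2 × Fin 2) : K :=
  q₀ o.1 * (((o.2.1 : ℕ) : K) * g₀ o.1 * Qbar0 o.1 ^ ((o.2.2 : ℕ))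
      * (1 - Qbar0 o.1) ^ (1 - (o.2.2 : ℕ))
    + (1 - ((o.2.1 : ℕ) : K)) * (1 - g₀ o.1) * (if (o.2.2 : ℕ) = 0 then (1 : K) else 0))

def firstOrderGradient (qW g Qbar : W → K) (o : W × Fin 2 × Fin 2) : K :=
  ((o.2.1 : ℕ) : K) / g o.1 * (((o.2.2 : ℕ) : K) - Qbar o.1) + Qbar o.1 - ∑ w, qW w * Qbar w

def secondOrderGradient [DecidableEq W] (qW g Qbar : W → K) (o₁ o₂ : W × Fin 2 × Fin 2) : K :=
  2 * ((o₁.2.1 : ℕ) : K) * (if o₁.1 = o₂.1 then (1 : K) else 0)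
    / (g o₁.1 * qW o₁.1) * (1 - ((o₂.2.1 : ℕ) : K) / g o₁.1)
    * (((o₁.2.2 : ℕ) : K) - Qbar o₁.1)

variable (q₀ g₀ Qbar0 : W → K)

theorem sum_missingOutcomeLaw_mul (f : W × Fin 2 × Fin 2 → K) :
    ∑ o, missingOutcomeLaw q₀ g₀ Qbar0 o * f o
      = ∑ w, q₀ w * ((1 - g₀ w) * f (w, 0, 0)
          + g₀ w * ((1 - Qbar0 w) * f (w, 1, 0) + Qbar0 w * f (w, 1, 1))) := by
  rw [Fintype.sum_prod_fin_two_fin_two]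
  refine sum_congr rfl fun w _ => ?_
  simp only [missingOutcomeLaw, Fin.val_zero, Fin.val_one, Nat.cast_zero, Nat.cast_one,
    pow_zero, pow_one, Nat.sub_zero, Nat.sub_self, if_pos, one_ne_zero, if_false]
  ring

theorem sum_missingOutcomeLaw_mul_firstOrderGradient (hq₀ : ∑ w, q₀ w = 1) (qW g Qbar : W → K) :
    ∑ o, missingOutcomeLaw q₀ g₀ Qbar0 o * firstOrderGradient qW g Qbar o
      = ∑ w, q₀ w * (g₀ w / g w * (Qbar0 w - Qbar w) + Qbar w) - ∑ w, qW w * Qbar w := by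
  have hmean : ∑ w, q₀ w * ∑ v, qW v * Qbar v = ∑ v, qW v * Qbar v := by
    rw [← sum_mul, hq₀, one_mul]
  rw [sum_missingOutcomeLaw_mul, ← hmean, ← sum_sub_distrib]
  refine sum_congr rfl fun w _ => ?_
  simp only [firstOrderGradient, Fin.val_zero, Fin.val_one, Nat.cast_zero, Nat.cast_one]
  ring

theorem sum_missingOutcomeLaw_mul_secondOrderGradient [DecidableEq W] (qW g Qbar : W → K)
    (o₁ : W × Fin 2 × Fin 2) :
    ∑ o₂, missingOutcomeLaw q₀ g₀ Qbar0 o₂ * secondOrderGradient qW g Qbar o₁ o₂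
      = 2 * ((o₁.2.1 : ℕ) : K) * q₀ o₁.1 / (g o₁.1 * qW o₁.1) * (1 - g₀ o₁.1 / g o₁.1)
          * (((o₁.2.2 : ℕ) : K) - Qbar o₁.1) := by
  rw [sum_missingOutcomeLaw_mul, sum_eq_single o₁.1]
  · simp only [secondOrderGradient, if_pos, Fin.val_zero, Fin.val_one, Nat.cast_zero,
      Nat.cast_one]
    ring
  · intro w _ hw
    simp [secondOrderGradient, Ne.symm hw]
  · exact fun h => absurd (mem_univ _) h

theorem sum_sum_missingOutcomeLaw_mul_secondOrderGradient [DecidableEq W] (qW g Qbar : W → K) :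
    ∑ o₁, ∑ o₂, missingOutcomeLaw q₀ g₀ Qbar0 o₁ * missingOutcomeLaw q₀ g₀ Qbar0 o₂
        * secondOrderGradient qW g Qbar o₁ o₂
      = ∑ w, 2 * q₀ w ^ 2 * g₀ w / (g w * qW w) * (1 - g₀ w / g w) * (Qbar0 w - Qbar w) := by
  simp only [mul_assoc, ← mul_sum, sum_missingOutcomeLaw_mul_secondOrderGradient]
  rw [sum_missingOutcomeLaw_mul]
  refine sum_congr rfl fun w _ => ?_
  simp only [Fin.val_zero, Fin.val_one, Nat.cast_zero, Nat.cast_one]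
  ring

end MissingOutcome

theorem second_order_expansion_discrete_general
    {W : Type*} [Fintype W] [DecidableEq W]
    (q₀ qW g₀ g Qbar0 Qbar : W → ℝ)
    (hq₀sum : ∑ w, q₀ w = 1)
    (p : W × Fin 2 × Fin 2 → ℝ)
    (hp : ∀ o : W × Fin 2 × Fin 2,
      p o = q₀ o.1 * (((o.2.1 : ℕ) : ℝ) * g₀ o.1 * Qbar0 o.1 ^ ((o.2.2 : ℕ))
              * (1 - Qbar0 o.1) ^ (1 - (o.2.2 : ℕ))
            + (1 - ((o.2.1 : ℕ) : ℝ)) * (1 - g₀ o.1)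
              * (if (o.2.2 : ℕ) = 0 then (1 : ℝ) else 0)))
    (D1 : W × Fin 2 × Fin 2 → ℝ)
    (hD1 : ∀ o : W × Fin 2 × Fin 2,
      D1 o = ((o.2.1 : ℕ) : ℝ) / g o.1 * (((o.2.2 : ℕ) : ℝ) - Qbar o.1)
          + Qbar o.1 - ∑ w, qW w * Qbar w)
    (D2 : (W × Fin 2 × Fin 2) → (W × Fin 2 × Fin 2) → ℝ)
    (hD2 : ∀ o₁ o₂ : W × Fin 2 × Fin 2,
      D2 o₁ o₂ = 2 * ((o₁.2.1 : ℕ) : ℝ) * (if o₁.1 = o₂.1 then (1 : ℝ) else 0)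
          / (g o₁.1 * qW o₁.1) * (1 - ((o₂.2.1 : ℕ) : ℝ) / g o₁.1)
          * (((o₁.2.2 : ℕ) : ℝ) - Qbar o₁.1)) :
    (∑ w, qW w * Qbar w) - (∑ w, q₀ w * Qbar0 w) =
      -(∑ o : W × Fin 2 × Fin 2, p o * D1 o)
      - (1 / 2) * (∑ o₁ : W × Fin 2 × Fin 2, ∑ o₂ : W × Fin 2 × Fin 2,
          p o₁ * p o₂ * D2 o₁ o₂)
      + ∑ w, q₀ w * (1 - g₀ w * q₀ w / (g w * qW w)) * (1 - g₀ w / g w)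
          * (Qbar w - Qbar0 w) := by
  obtain rfl : p = missingOutcomeLaw q₀ g₀ Qbar0 := funext hp
  obtain rfl : D1 = firstOrderGradient qW g Qbar := funext hD1
  obtain rfl : D2 = secondOrderGradient qW g Qbar := funext fun o₁ => funext (hD2 o₁)
  rw [sum_missingOutcomeLaw_mul_firstOrderGradient q₀ g₀ Qbar0 hq₀sum,
    sum_sum_missingOutcomeLaw_mul_secondOrderGradient, ← sub_eq_zero]
  simp only [mul_sum, ← sum_neg_distrib, ← sum_sub_distrib, ← sum_add_distrib]
  exact sum_eq_zero fun w _ => by ring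

/-- **Second-order expansion of the mean-outcome functional for discrete covariates.**
`W` finite, observed data `O = (w,a,y) ∈ W × {0,1} × {0,1}` with law
`P₀(w,a,y) = q₀(w)·[a·g₀(w)·Qbar0(w)^y·(1−Qbar0(w))^{1−y} + (1−a)·(1−g₀(w))·𝟙{y=0}]`.
With `Ψ := ∑_w qW(w)·Qbar(w)`, `ψ₀ := ∑_w q₀(w)·Qbar0(w)`,
`D⁽¹⁾(w,a,y) := (a/g(w))·(y − Qbar(w)) + Qbar(w) − Ψ`,
`D⁽²⁾((w₁,a₁,y₁),(w₂,a₂,y₂)) := 2·a₁·𝟙{w₁=w₂}/(g(w₁)·qW(w₁))·(1 − a₂/g(w₁))·(y₁ − Qbar(w₁))`,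
and `R₃ := ∑_w q₀(w)·(1 − g₀(w)q₀(w)/(g(w)qW(w)))·(1 − g₀(w)/g(w))·(Qbar(w) − Qbar0(w))`,
we have `Ψ − ψ₀ = −E_{P₀}[D⁽¹⁾] − (1/2)·E_{P₀×P₀}[D⁽²⁾] + R₃`. -/
theorem second_order_expansion_discrete
    {W : Type*} [Fintype W] [DecidableEq W]
    (q₀ qW g₀ g Qbar0 Qbar : W → ℝ)
    (hq₀pos : ∀ w, 0 < q₀ w) (hq₀sum : ∑ w, q₀ w = 1)
    (hqWpos : ∀ w, 0 < qW w) (hqWsum : ∑ w, qW w = 1)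
    (hg₀0 : ∀ w, 0 ≤ g₀ w) (hg₀1 : ∀ w, g₀ w ≤ 1)
    (hQbar00 : ∀ w, 0 ≤ Qbar0 w) (hQbar01 : ∀ w, Qbar0 w ≤ 1)
    (hgpos : ∀ w, 0 < g w) (hg1 : ∀ w, g w ≤ 1)
    (p : W × Fin 2 × Fin 2 → ℝ)
    (hp : ∀ o : W × Fin 2 × Fin 2,
      p o = q₀ o.1 * (((o.2.1 : ℕ) : ℝ) * g₀ o.1 * Qbar0 o.1 ^ ((o.2.2 : ℕ))
              * (1 - Qbar0 o.1) ^ (1 - (o.2.2 : ℕ))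
            + (1 - ((o.2.1 : ℕ) : ℝ)) * (1 - g₀ o.1)
              * (if (o.2.2 : ℕ) = 0 then (1 : ℝ) else 0)))
    (D1 : W × Fin 2 × Fin 2 → ℝ)
    (hD1 : ∀ o : W × Fin 2 × Fin 2,
      D1 o = ((o.2.1 : ℕ) : ℝ) / g o.1 * (((o.2.2 : ℕ) : ℝ) - Qbar o.1)
          + Qbar o.1 - ∑ w, qW w * Qbar w)
    (D2 : (W × Fin 2 × Fin 2) → (W × Fin 2 × Fin 2) → ℝ)
    (hD2 : ∀ o₁ o₂ : W × Fin 2 × Fin 2,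
      D2 o₁ o₂ = 2 * ((o₁.2.1 : ℕ) : ℝ) * (if o₁.1 = o₂.1 then (1 : ℝ) else 0)
          / (g o₁.1 * qW o₁.1) * (1 - ((o₂.2.1 : ℕ) : ℝ) / g o₁.1)
          * (((o₁.2.2 : ℕ) : ℝ) - Qbar o₁.1)) :
    (∑ w, qW w * Qbar w) - (∑ w, q₀ w * Qbar0 w) =
      -(∑ o : W × Fin 2 × Fin 2, p o * D1 o)
      - (1 / 2) * (∑ o₁ : W × Fin 2 × Fin 2, ∑ o₂ : W × Fin 2 × Fin 2,
          p o₁ * p o₂ * D2 o₁ o₂)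
      + ∑ w, q₀ w * (1 - g₀ w * q₀ w / (g w * qW w)) * (1 - g₀ w / g w)
          * (Qbar w - Qbar0 w) :=
  second_order_expansion_discrete_general q₀ qW g₀ g Qbar0 Qbar hq₀sum p hp D1 hD1 D2 hD2
end

section
/- Identification of the mean outcome under missingness at random: suppose A and Y are conditionally independent given σ(W), g₀∘W is a version of the conditional expectation E[A | σ(W)], b∘W is a version of E[A·Y | σ(W)], and g₀(W) > 0 almost surely. Then E[b(W)/g₀(W)] = E[Y]; equivalently, letting Q̄₀ := b/g₀ (the outcome regression E[Y | A=1, W]), the parameter ψ₀ := E[Q̄₀(W)] equals the full-data mean E[Y]. -/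
/-!
Conditional independence makes the conditional expectation multiplicative,
`E[A·Y | W] = E[A | W]·E[Y | W]`: under the regular conditional distribution `condExpKernel`,
`A` and `Y` are independent in almost every fibre, where the product rule for integrals applies.
Hence `b(W) / g₀(W) = E[Y | W]` wherever `g₀(W) > 0`, and the tower property gives
`E[b(W) / g₀(W)] = E[E[Y | W]] = E[Y]`.
-/

open MeasureTheory ProbabilityTheory

namespace ProbabilityTheory

variable {Ω β β' : Type*} {m mΩ : MeasurableSpace Ω} [StandardBorelSpace Ω] {hm : m ≤ mΩ}
  {μ : Measure Ω} [IsFiniteMeasure μ] {mβ : MeasurableSpace β} {mβ' : MeasurableSpace β'}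
  {f f' : Ω → β} {g g' : Ω → β'}

lemma CondIndepFun.congr (hfg : CondIndepFun m hm f g μ) (hf : f =ᵐ[μ] f')
    (hg : g =ᵐ[μ] g') : CondIndepFun m hm f' g' μ := by
  rw [← condExpKernel_comp_trim (μ := μ) hm] at hf hg
  exact Kernel.IndepFun.congr' hfg (Measure.ae_ae_of_ae_comp hf) (Measure.ae_ae_of_ae_comp hg)

lemma CondIndepFun.ae_indepFun_condExpKernel
    [MeasurableSpace.CountableOrCountablyGenerated Ω (β × β')]
    (hfg : CondIndepFun m hm f g μ) (hf : Measurable f) (hg : Measurable g) :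
    ∀ᵐ ω ∂μ, IndepFun f g (condExpKernel μ m ω) := by
  have h := (condIndepFun_iff_map_prod_eq_prod_map_map hf hg).1 hfg
  filter_upwards [ae_of_ae_trim hm h] with ω hω
  rw [indepFun_iff_map_prod_eq_prod_map_map hf.aemeasurable hg.aemeasurable]
  simpa only [Kernel.map_apply _ (hf.prodMk hg), Kernel.prod_apply, Kernel.map_apply _ hf,
    Kernel.map_apply _ hg] using hω

lemma CondIndepFun.condExp_mul_of_measurable {f g : Ω → ℝ} (hfg : CondIndepFun m hm f g μ)
    (hf : Measurable f) (hg : Measurable g) (hf_int : Integrable f μ) (hg_int : Integrable g μ)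
    (hfg_int : Integrable (f * g) μ) :
    μ[f * g | m] =ᵐ[μ] μ[f | m] * μ[g | m] := by
  filter_upwards [hfg.ae_indepFun_condExpKernel hf hg,
    condExp_ae_eq_integral_condExpKernel hm hfg_int, condExp_ae_eq_integral_condExpKernel hm hf_int,
    condExp_ae_eq_integral_condExpKernel hm hg_int] with ω hind hfg' hf' hg'
  rw [hfg', Pi.mul_apply, hf', hg']
  exact hind.integral_mul_eq_mul_integral hf.aestronglyMeasurable hg.aestronglyMeasurable

lemma CondIndepFun.condExp_mul {f g : Ω → ℝ} (hfg : CondIndepFun m hm f g μ)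
    (hf : Integrable f μ) (hg : Integrable g μ) (hfg_int : Integrable (f * g) μ) :
    μ[f * g | m] =ᵐ[μ] μ[f | m] * μ[g | m] := by
  have hf' := hf.1.ae_eq_mk
  have hg' := hg.1.ae_eq_mk
  calc μ[f * g | m]
      =ᵐ[μ] μ[hf.1.mk f * hg.1.mk g | m] := condExp_congr_ae (hf'.mul hg')
    _ =ᵐ[μ] μ[hf.1.mk f | m] * μ[hg.1.mk g | m] :=
      (hfg.congr hf' hg').condExp_mul_of_measurable hf.1.stronglyMeasurable_mk.measurable
        hg.1.stronglyMeasurable_mk.measurable (hf.congr hf') (hg.congr hg')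
        (hfg_int.congr (hf'.mul hg'))
    _ =ᵐ[μ] μ[f | m] * μ[g | m] := (condExp_congr_ae hf'.symm).mul (condExp_congr_ae hg'.symm)

end ProbabilityTheory

theorem identification_mean_outcome_MAR_general
    {Ω 𝒲 : Type*} [mΩ : MeasurableSpace Ω] [StandardBorelSpace Ω]
    [MeasurableSpace 𝒲]
    (μ : Measure Ω) [IsProbabilityMeasure μ]
    (W : Ω → 𝒲) (A Y : Ω → ℝ) (g₀ b : 𝒲 → ℝ)
    (hAmeas : Measurable A)
    (hA01 : ∀ ω, A ω = 0 ∨ A ω = 1)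
    (hYint : Integrable Y μ)
    (hmW : MeasurableSpace.comap W ‹MeasurableSpace 𝒲› ≤ mΩ)
    (hCI : CondIndepFun (MeasurableSpace.comap W ‹MeasurableSpace 𝒲›) hmW A Y μ)
    (hg₀ : μ[A | MeasurableSpace.comap W ‹MeasurableSpace 𝒲›]
        =ᵐ[μ] fun ω => g₀ (W ω))
    (hb : μ[fun ω => A ω * Y ω | MeasurableSpace.comap W ‹MeasurableSpace 𝒲›]
        =ᵐ[μ] fun ω => b (W ω))
    (hpos : ∀ᵐ ω ∂μ, 0 < g₀ (W ω)) :
    ∫ ω, b (W ω) / g₀ (W ω) ∂μ = ∫ ω, Y ω ∂μ := by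
  set m := MeasurableSpace.comap W ‹MeasurableSpace 𝒲›
  have hA_le : ∀ᵐ ω ∂μ, ‖A ω‖ ≤ 1 :=
    ae_of_all _ fun ω ↦ by rcases hA01 ω with h | h <;> simp [h]
  have hAY : μ[A * Y | m] =ᵐ[μ] μ[A | m] * μ[Y | m] :=
    hCI.condExp_mul ((integrable_const 1).mono' hAmeas.aestronglyMeasurable hA_le) hYint
      (hYint.bdd_mul hAmeas.aestronglyMeasurable hA_le)
  have hQ : (fun ω ↦ b (W ω) / g₀ (W ω)) =ᵐ[μ] μ[Y | m] := by
    filter_upwards [hb, hg₀, hAY, hpos] with ω hb hg₀ hAY hpos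
    have hb_eq : b (W ω) = g₀ (W ω) * μ[Y | m] ω := by rw [← hb, ← hg₀]; exact hAY
    rw [hb_eq, mul_div_cancel_left₀ _ hpos.ne']
  rw [integral_congr_ae hQ, integral_condExp hmW]

/-- **Identification of the mean outcome under missingness at random.**
On a probability space carrying covariates `W`, a missingness indicator
`A ∈ {0,1}`, and an integrable outcome `Y`: if `A` and `Y` are conditionally
independent given `σ(W)`, `g₀ ∘ W` is a version of `E[A | σ(W)]`,
`b ∘ W` is a version of `E[A·Y | σ(W)]`, and `g₀(W) > 0` a.s., then
`E[b(W)/g₀(W)] = E[Y]` (i.e., with `Qbar0 := b/g₀` the outcome regression,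
`ψ₀ := E[Qbar0(W)]` equals the full-data mean `E[Y]`). -/
theorem identification_mean_outcome_MAR
    {Ω 𝒲 : Type*} [mΩ : MeasurableSpace Ω] [StandardBorelSpace Ω]
    [MeasurableSpace 𝒲]
    (μ : Measure Ω) [IsProbabilityMeasure μ]
    (W : Ω → 𝒲) (A Y : Ω → ℝ) (g₀ b : 𝒲 → ℝ)
    (hWmeas : Measurable W) (hAmeas : Measurable A)
    (hg₀meas : Measurable g₀) (hbmeas : Measurable b)
    (hA01 : ∀ ω, A ω = 0 ∨ A ω = 1)
    (hYint : Integrable Y μ)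
    (hmW : MeasurableSpace.comap W ‹MeasurableSpace 𝒲› ≤ mΩ)
    (hCI : CondIndepFun (MeasurableSpace.comap W ‹MeasurableSpace 𝒲›) hmW A Y μ)
    (hg₀ : μ[A | MeasurableSpace.comap W ‹MeasurableSpace 𝒲›]
        =ᵐ[μ] fun ω => g₀ (W ω))
    (hb : μ[fun ω => A ω * Y ω | MeasurableSpace.comap W ‹MeasurableSpace 𝒲›]
        =ᵐ[μ] fun ω => b (W ω))
    (hpos : ∀ᵐ ω ∂μ, 0 < g₀ (W ω))
    (hint1 : Integrable (fun ω => A ω * Y ω / g₀ (W ω)) μ)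
    (hint2 : Integrable (fun ω => b (W ω) / g₀ (W ω)) μ) :
    ∫ ω, b (W ω) / g₀ (W ω) ∂μ = ∫ ω, Y ω ∂μ :=
  identification_mean_outcome_MAR_general (mΩ := mΩ) μ W A Y g₀ b hAmeas hA01 hYint hmW hCI hg₀ hb
    hpos
end

section
/- The 2-TMLE solves the empirical second-order equation: given data (Wᵢ, Aᵢ, Yᵢ) ∈ ℝ^d × {0,1} × ℝ, i = 1, …, n, a kernel value function K_h : ℝ^d → ℝ, define q̂(w) := (1/n)∑ⱼ K_h(w − Wⱼ), ĝ_h(w) := ∑ⱼ K_h(w − Wⱼ)Aⱼ / ∑ⱼ K_h(w − Wⱼ), the auxiliary covariate Ĥ⁽²⁾(w) := (1/ĝ(w))·(1 − ĝ_h(w)/ĝ(w)), and D⁽²⁾_h((w₁,a₁,y₁),(w₂,a₂,y₂)) := 2·a₁·K_h(w₁ − w₂)/(ĝ(w₁)·q̂(w₁))·(1 − a₂/ĝ(w₁))·(y₁ − Q̄*(w₁)). If q̂(Wᵢ) ≠ 0 for all i, then (1/n²)∑ᵢ∑ⱼ D⁽²⁾_h((Wᵢ,Aᵢ,Yᵢ),(Wⱼ,Aⱼ,Yⱼ))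 = (2/n)∑ᵢ Aᵢ·Ĥ⁽²⁾(Wᵢ)·(Yᵢ − Q̄*(Wᵢ)). In particular, if the second targeting score equation ∑ᵢ Aᵢ·Ĥ⁽²⁾(Wᵢ)·(Yᵢ − Q̄*(Wᵢ)) = 0 holds, then the empirical second-order equation (1/n²)∑ᵢ∑ⱼ D⁽²⁾_h((Wᵢ,Aᵢ,Yᵢ),(Wⱼ,Aⱼ,Yⱼ)) = 0 holds. -/
/-! Summing the second-order kernel `D⁽²⁾_h((Wᵢ,Aᵢ,Yᵢ), ·)` over the second argument factors out
`∑ⱼ K_h(Wᵢ − Wⱼ) = n q̂(Wᵢ)`, which cancels the `q̂(Wᵢ)` in its denominator, and leaves the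
kernel-weighted mean of the `Aⱼ`, which is exactly `ĝ_h(Wᵢ)`. So the inner sum is
`n · 2 Aᵢ Ĥ⁽²⁾(Wᵢ)(Yᵢ − Q̄*(Wᵢ))`, and the double sum collapses to the score equation. -/

open Finset

theorem Finset.sum_mul_one_sub_div_eq {ι 𝕜 : Type*} [Field 𝕜] (s : Finset ι) (k a : ι → 𝕜)
    (g : 𝕜) (hk : ∑ j ∈ s, k j ≠ 0) :
    ∑ j ∈ s, k j * (1 - a j / g) =
      (∑ j ∈ s, k j) * (1 - (∑ j ∈ s, k j * a j) / (∑ j ∈ s, k j) / g) := by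
  rw [mul_one_sub, mul_div_assoc', mul_div_cancel₀ _ hk, sum_div, ← sum_sub_distrib]
  simp only [mul_one_sub, mul_div_assoc]

theorem tmle2_solves_second_order_equation_general
    {d : ℕ} (ghat Qstar Kh : (Fin d → ℝ) → ℝ)
    (n : ℕ) (hn : 0 < n)
    (W : Fin n → (Fin d → ℝ)) (A Y : Fin n → ℝ)
    (qhat : (Fin d → ℝ) → ℝ)
    (hqhat : ∀ w, qhat w = (1 / (n : ℝ)) * ∑ j, Kh (w - W j))
    (ghat_h : (Fin d → ℝ) → ℝ)
    (hghat_h : ∀ w, ghat_h w = (∑ j, Kh (w - W j) * A j) / (∑ j, Kh (w - W j)))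
    (H2 : (Fin d → ℝ) → ℝ)
    (hH2 : ∀ w, H2 w = (1 / ghat w) * (1 - ghat_h w / ghat w))
    (D2 : ((Fin d → ℝ) × ℝ × ℝ) → ((Fin d → ℝ) × ℝ × ℝ) → ℝ)
    (hD2 : ∀ o₁ o₂ : (Fin d → ℝ) × ℝ × ℝ,
      D2 o₁ o₂ = 2 * o₁.2.1 * Kh (o₁.1 - o₂.1) / (ghat o₁.1 * qhat o₁.1)
          * (1 - o₂.2.1 / ghat o₁.1) * (o₁.2.2 - Qstar o₁.1))
    (hqhat_ne : ∀ i, qhat (W i) ≠ 0) :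
    ((1 / (n : ℝ) ^ 2) * ∑ i, ∑ j, D2 (W i, A i, Y i) (W j, A j, Y j) =
      (2 / (n : ℝ)) * ∑ i, A i * H2 (W i) * (Y i - Qstar (W i))) ∧
    ((∑ i, A i * H2 (W i) * (Y i - Qstar (W i)) = 0) →
      (1 / (n : ℝ) ^ 2) * ∑ i, ∑ j, D2 (W i, A i, Y i) (W j, A j, Y j) = 0) := by
  have hn₀ : (n : ℝ) ≠ 0 := Nat.cast_ne_zero.mpr hn.ne'
  have inner_sum : ∀ i, ∑ j, D2 (W i, A i, Y i) (W j, A j, Y j) =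
      n * (2 * A i * H2 (W i) * (Y i - Qstar (W i))) := by
    intro i
    have kernel_sum : ∑ j, Kh (W i - W j) = n * qhat (W i) := by
      rw [hqhat]; field_simp
    have hkernel_sum : ∑ j, Kh (W i - W j) ≠ 0 := by
      rw [kernel_sum]; exact mul_ne_zero hn₀ (hqhat_ne i)
    calc ∑ j, D2 (W i, A i, Y i) (W j, A j, Y j)
        = 2 * A i / (ghat (W i) * qhat (W i)) * (Y i - Qstar (W i)) *
            ∑ j, Kh (W i - W j) * (1 - A j / ghat (W i)) := by
          rw [mul_sum]; refine sum_congr rfl fun j _ => ?_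
          rw [hD2]; ring
      _ = n * (2 * A i * H2 (W i) * (Y i - Qstar (W i))) := by
          rw [sum_mul_one_sub_div_eq _ _ _ _ hkernel_sum, ← hghat_h, kernel_sum, hH2]
          field_simp [hqhat_ne i]
  have second_order_eq : (1 / (n : ℝ) ^ 2) * ∑ i, ∑ j, D2 (W i, A i, Y i) (W j, A j, Y j) =
      (2 / (n : ℝ)) * ∑ i, A i * H2 (W i) * (Y i - Qstar (W i)) := by
    simp only [inner_sum, ← mul_sum, mul_assoc (2 : ℝ)]
    field_simp
  exact ⟨second_order_eq, fun h => by rw [second_order_eq, h, mul_zero]⟩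

/-- **The 2-TMLE solves the empirical second-order equation.**
Given data `(Wᵢ, Aᵢ, Yᵢ) ∈ ℝ^d × {0,1} × ℝ` and a kernel `K_h`, define
`q̂(w) := (1/n)∑ⱼ K_h(w − Wⱼ)`,
`ĝ_h(w) := ∑ⱼ K_h(w − Wⱼ)Aⱼ / ∑ⱼ K_h(w − Wⱼ)`,
`Ĥ⁽²⁾(w) := (1/ĝ(w))·(1 − ĝ_h(w)/ĝ(w))`, and
`D⁽²⁾_h((w₁,a₁,y₁),(w₂,a₂,y₂)) := 2a₁·K_h(w₁−w₂)/(ĝ(w₁)q̂(w₁))·(1 − a₂/ĝ(w₁))·(y₁ − Qstar(w₁))`.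
If `q̂(Wᵢ) ≠ 0` for all `i`, then
`(1/n²)∑ᵢ∑ⱼ D⁽²⁾_h((Wᵢ,Aᵢ,Yᵢ),(Wⱼ,Aⱼ,Yⱼ)) = (2/n)∑ᵢ AᵢĤ⁽²⁾(Wᵢ)(Yᵢ − Qstar(Wᵢ))`;
in particular, if `∑ᵢ AᵢĤ⁽²⁾(Wᵢ)(Yᵢ − Qstar(Wᵢ)) = 0`, the empirical
second-order equation `(1/n²)∑ᵢ∑ⱼ D⁽²⁾_h(...) = 0` holds. -/
theorem tmle2_solves_second_order_equation
    {d : ℕ} (ghat Qstar Kh : (Fin d → ℝ) → ℝ)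
    (hghat : ∀ w, ghat w ≠ 0)
    (n : ℕ) (hn : 0 < n)
    (W : Fin n → (Fin d → ℝ)) (A Y : Fin n → ℝ)
    (hA01 : ∀ i, A i = 0 ∨ A i = 1)
    (qhat : (Fin d → ℝ) → ℝ)
    (hqhat : ∀ w, qhat w = (1 / (n : ℝ)) * ∑ j, Kh (w - W j))
    (ghat_h : (Fin d → ℝ) → ℝ)
    (hghat_h : ∀ w, ghat_h w = (∑ j, Kh (w - W j) * A j) / (∑ j, Kh (w - W j)))
    (H2 : (Fin d → ℝ) → ℝ)
    (hH2 : ∀ w, H2 w = (1 / ghat w) * (1 - ghat_h w / ghat w))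
    (D2 : ((Fin d → ℝ) × ℝ × ℝ) → ((Fin d → ℝ) × ℝ × ℝ) → ℝ)
    (hD2 : ∀ o₁ o₂ : (Fin d → ℝ) × ℝ × ℝ,
      D2 o₁ o₂ = 2 * o₁.2.1 * Kh (o₁.1 - o₂.1) / (ghat o₁.1 * qhat o₁.1)
          * (1 - o₂.2.1 / ghat o₁.1) * (o₁.2.2 - Qstar o₁.1))
    (hqhat_ne : ∀ i, qhat (W i) ≠ 0) :
    ((1 / (n : ℝ) ^ 2) * ∑ i, ∑ j, D2 (W i, A i, Y i) (W j, A j, Y j) =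
      (2 / (n : ℝ)) * ∑ i, A i * H2 (W i) * (Y i - Qstar (W i))) ∧
    ((∑ i, A i * H2 (W i) * (Y i - Qstar (W i)) = 0) →
      (1 / (n : ℝ) ^ 2) * ∑ i, ∑ j, D2 (W i, A i, Y i) (W j, A j, Y j) = 0) :=
  tmle2_solves_second_order_equation_general ghat Qstar Kh n hn W A Y qhat hqhat ghat_h hghat_h H2
    hH2 D2 hD2 hqhat_ne
end

section
/- Deterministic representation-error bound for the kernel-smoothed second-order term (univariate covariate): define A_h := 2∫ [∫ (1/h)·K((w₁ − w₂)/h)·(1 − g₀(w₂)/g(w₁))·q₀(w₂) dw₂]·g₀(w₁)·(Q̄₀(w₁) − Q̄(w₁))·q₀(w₁)/(g(w₁)·q_W(w₁)) dw₁ and A₀ := 2∫ q₀(w)·(1 − g₀(w)/g(w))·g₀(w)·(Q̄₀(w) − Q̄(w))·q₀(w)/(g(w)·q_W(w)) dw. Then there exists a constant C, depending only on δ, m₀, K, and the suprema of the derivatives of q₀ and g₀·q₀ up to order m₀+1, such that for all h > 0, |A_h − A₀| ≤ C·h^{m₀+1}·‖Q̄ − Q̄₀‖_{L²(q₀)}, where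 ‖f‖_{L²(q₀)}² := ∫ f(w)²·q₀(w) dw. -/
/-!
Substituting `w₂ = w₁ - h u` turns the inner integral of `A_h` into the kernel smoothing
`K_h ∗ (q₀ - g₀ q₀ / g(w₁))` at `w₁`, so `A_h - A₀ = 2 ∫ (φ - ψ) s` with `ψ = q₀ - g₀ q₀ / g`,
`φ` its smoothed version, and a weight `|s| ≤ δ⁻² |Q̄ - Q̄₀| q₀`. Expanding `F ∈ {q₀, g₀ q₀}` to
order `m₀` by Taylor's theorem, the vanishing moments of `K` kill the polynomial part, leaving
`|K_h ∗ F - F| ≤ B h^(m₀+1) ∫ |u|^(m₀+1) |K u| du / (m₀+1)!`. Finally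
`∫ |Q̄ - Q̄₀| q₀ ≤ ‖Q̄ - Q̄₀‖_{L²(q₀)}` by Cauchy–Schwarz for the probability density `q₀`.
-/

open MeasureTheory

theorem taylorWithinEval_uIcc_eq_sum {F : ℝ → ℝ} {n : ℕ} (hF : ContDiff ℝ n F) {x y : ℝ}
    (hxy : x ≠ y) :
    taylorWithinEval F n (Set.uIcc x y) x y =
      ∑ k ∈ Finset.range (n + 1), iteratedDeriv k F x * (y - x) ^ k / k.factorial := by
  rw [taylor_within_apply]
  refine Finset.sum_congr rfl fun k hk => ?_
  have hkn : (k : WithTop ℕ∞) ≤ n := by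
    exact_mod_cast Nat.lt_succ_iff.mp (Finset.mem_range.mp hk)
  rw [iteratedDerivWithin_eq_iteratedDeriv (uniqueDiffOn_uIcc hxy) (hF.contDiffAt.of_le hkn)
    Set.left_mem_uIcc, smul_eq_mul]
  ring

theorem abs_sub_taylor_sum_le {F : ℝ → ℝ} {n : ℕ} {B : ℝ} (hF : ContDiff ℝ (n + 1) F)
    (hB : ∀ t, |iteratedDeriv (n + 1) F t| ≤ B) (x y : ℝ) :
    |F y - ∑ k ∈ Finset.range (n + 1), iteratedDeriv k F x * (y - x) ^ k / k.factorial|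
      ≤ B * |y - x| ^ (n + 1) / (n + 1).factorial := by
  rcases eq_or_ne x y with rfl | hxy
  · simp [Finset.sum_range_succ']
  obtain ⟨t, -, ht⟩ := taylor_mean_remainder_lagrange_iteratedDeriv hxy hF.contDiffOn
  rw [← taylorWithinEval_uIcc_eq_sum hF.of_succ hxy, ht, abs_div, abs_mul, abs_pow,
    Nat.abs_cast]
  gcongr
  exact hB t

theorem abs_sub_inv_mul_le {δ g a b E : ℝ} (hδ : 0 < δ) (hg : δ ≤ g) (ha : |a| ≤ E)
    (hb : |b| ≤ E) : |a - g⁻¹ * b| ≤ (1 + δ⁻¹) * E := by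
  have hginv : g⁻¹ ≤ δ⁻¹ := inv_anti₀ hδ hg
  have hg0 : 0 ≤ g⁻¹ := inv_nonneg.mpr (hδ.le.trans hg)
  calc |a - g⁻¹ * b| ≤ |a| + g⁻¹ * |b| :=
        (abs_sub _ _).trans_eq (by rw [abs_mul, abs_of_nonneg hg0])
    _ ≤ E + δ⁻¹ * E := by gcongr
    _ = (1 + δ⁻¹) * E := by ring

theorem abs_mul_mul_div_mul_le {δ p q D g r : ℝ} (hδ : 0 < δ) (hp0 : 0 ≤ p) (hp1 : p ≤ 1)
    (hq : 0 ≤ q) (hg : δ ≤ g) (hr : δ ≤ r) :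
    |p * q * D / (g * r)| ≤ δ⁻¹ * δ⁻¹ * (|D| * q) := by
  have hgr : δ * δ ≤ g * r := mul_le_mul hg hr hδ.le (hδ.le.trans hg)
  have hgr0 : 0 < g * r := mul_pos hδ hδ |>.trans_le hgr
  rw [abs_div, abs_mul, abs_mul, abs_of_nonneg hp0, abs_of_nonneg hq,
    abs_of_pos hgr0, div_eq_mul_inv]
  calc p * q * |D| * (g * r)⁻¹ ≤ 1 * q * |D| * (δ * δ)⁻¹ := by gcongr
    _ = δ⁻¹ * δ⁻¹ * (|D| * q) := by rw [mul_inv]; ring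

noncomputable def kernelSmoothing (K : ℝ → ℝ) (h : ℝ) (F : ℝ → ℝ) (x : ℝ) : ℝ :=
  ∫ u, K u * F (x - h * u)

section KernelSmoothing

variable {K F : ℝ → ℝ}

theorem integral_rescaled_kernel_mul_eq {h : ℝ} (hh : 0 < h) (x : ℝ) :
    ∫ y, 1 / h * K ((x - y) / h) * F y = kernelSmoothing K h F x := by
  have hshift := integral_sub_left_eq_self
    (fun v => 1 / h * K (v / h) * F (x - v)) volume x
  have hscale := Measure.integral_comp_div (fun u => K u * F (x - h * u)) h
  simp only [sub_sub_cancel, mul_div_cancel₀ _ hh.ne'] at hshift hscale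
  calc ∫ y, 1 / h * K ((x - y) / h) * F y
      = ∫ v, 1 / h * K (v / h) * F (x - v) := hshift
    _ = 1 / h * ∫ v, K (v / h) * F (x - v) := by
      rw [← integral_const_mul]
      simp only [mul_assoc]
    _ = kernelSmoothing K h F x := by
      rw [hscale, abs_of_pos hh, smul_eq_mul, kernelSmoothing, ← mul_assoc, one_div,
        inv_mul_cancel₀ hh.ne', one_mul]

theorem integrable_kernel_mul_comp (hK : Integrable K) (hF : Continuous F) {B : ℝ}
    (hFB : ∀ t, |F t| ≤ B) (h x : ℝ) : Integrable (fun u => K u * F (x - h * u)) :=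
  hK.mul_bdd (by fun_prop) (ae_of_all _ fun u => hFB _)

theorem continuous_kernelSmoothing (hK : Integrable K) (hF : Continuous F) {B : ℝ}
    (hFB : ∀ t, |F t| ≤ B) (h : ℝ) : Continuous (kernelSmoothing K h F) :=
  continuous_of_dominated (bound := fun u => |K u| * B)
    (fun x => (integrable_kernel_mul_comp hK hF hFB h x).aestronglyMeasurable)
    (fun x => ae_of_all _ fun u => by
      rw [Real.norm_eq_abs, abs_mul]
      exact mul_le_mul_of_nonneg_left (hFB _) (abs_nonneg _))
    (hK.abs.mul_const B) (ae_of_all _ fun u => by fun_prop)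

theorem kernelSmoothing_sub_const_mul {G : ℝ → ℝ} {h x : ℝ}
    (hF : Integrable fun u => K u * F (x - h * u))
    (hG : Integrable fun u => K u * G (x - h * u)) (c : ℝ) :
    kernelSmoothing K h (fun y => F y - c * G y) x
      = kernelSmoothing K h F x - c * kernelSmoothing K h G x := by
  rw [kernelSmoothing, kernelSmoothing, kernelSmoothing, ← integral_const_mul,
    ← integral_sub hF (hG.const_mul c)]
  congr 1 with u
  ring

theorem integral_rescaled_kernel_mul_one_sub_div_mul {p q : ℝ → ℝ} {h : ℝ} (hh : 0 < h) {x : ℝ}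
    (hq : Integrable fun u => K u * q (x - h * u))
    (hpq : Integrable fun u => K u * (p (x - h * u) * q (x - h * u))) (c : ℝ) :
    ∫ y, 1 / h * K ((x - y) / h) * (1 - p y / c) * q y
      = kernelSmoothing K h q x - c⁻¹ * kernelSmoothing K h (fun y => p y * q y) x := by
  rw [← kernelSmoothing_sub_const_mul (G := fun y => p y * q y) hq hpq,
    ← integral_rescaled_kernel_mul_eq hh]
  congr 1 with y
  ring

theorem integrable_pow_mul_of_integrable_abs_pow_mul {n j : ℕ} (hK : Integrable K)
    (hKmom : Integrable fun u => |u| ^ n * |K u|) (hj : j ≤ n) :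
    Integrable fun u => u ^ j * K u := by
  refine (hK.abs.add hKmom).mono' (by fun_prop) (ae_of_all _ fun u => ?_)
  rw [Real.norm_eq_abs, abs_mul, abs_pow, Pi.add_apply]
  rcases le_total |u| 1 with hu | hu
  · have hpow : |u| ^ j ≤ 1 := pow_le_one₀ (abs_nonneg u) hu
    nlinarith [abs_nonneg (K u), mul_nonneg (pow_nonneg (abs_nonneg u) n) (abs_nonneg (K u))]
  · have hpow : |u| ^ j ≤ |u| ^ n := pow_le_pow_right₀ hu hj
    nlinarith [abs_nonneg (K u)]

variable {n : ℕ}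

theorem integral_sum_mul_pow_mul_eq (hK : Integrable K) (hKunit : ∫ u, K u = 1)
    (hKorth : ∀ j : ℕ, 1 ≤ j → j ≤ n → ∫ u, u ^ j * K u = 0)
    (hKmom : Integrable fun u => |u| ^ (n + 1) * |K u|) (c : ℕ → ℝ) :
    ∫ u, ∑ j ∈ Finset.range (n + 1), c j * (u ^ j * K u) = c 0 := by
  have hint : ∀ j ∈ Finset.range (n + 1), Integrable fun u => c j * (u ^ j * K u) :=
    fun j hj => (integrable_pow_mul_of_integrable_abs_pow_mul hK hKmom
      (by simp at hj; omega)).const_mul _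
  rw [integral_finsetSum _ hint, Finset.sum_range_succ']
  simp only [integral_const_mul, pow_zero, one_mul, hKunit, mul_one, add_eq_right]
  exact Finset.sum_eq_zero fun j hj => by
    rw [hKorth (j + 1) (by omega) (by simp at hj; omega), mul_zero]

theorem abs_kernelSmoothing_sub_le {B : ℝ} (hK : Integrable K) (hKunit : ∫ u, K u = 1)
    (hKorth : ∀ j : ℕ, 1 ≤ j → j ≤ n → ∫ u, u ^ j * K u = 0)
    (hKmom : Integrable fun u => |u| ^ (n + 1) * |K u|)
    (hF : ContDiff ℝ (n + 1) F) (hB : ∀ t, |iteratedDeriv (n + 1) F t| ≤ B) (h x : ℝ) :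
    |kernelSmoothing K h F x - F x|
      ≤ B * (∫ u, |u| ^ (n + 1) * |K u|) / (n + 1).factorial * |h| ^ (n + 1) := by
  set c : ℕ → ℝ := fun j => iteratedDeriv j F x * (-h) ^ j / j.factorial
  set R : ℝ → ℝ := fun u => K u * (F (x - h * u) - ∑ j ∈ Finset.range (n + 1),
    iteratedDeriv j F x * (x - h * u - x) ^ j / j.factorial)
  have hdecomp : (fun u => K u * F (x - h * u))
      = fun u => ∑ j ∈ Finset.range (n + 1), c j * (u ^ j * K u) + R u := by
    ext u
    simp only [R, c, mul_sub, Finset.mul_sum, sub_sub_cancel_left]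
    ring_nf
  have hR : ∀ u, |R u| ≤ B * |h| ^ (n + 1) / (n + 1).factorial * (|u| ^ (n + 1) * |K u|) := by
    intro u
    have hdist : |x - h * u - x| = |h| * |u| := by rw [sub_sub_cancel_left, abs_neg, abs_mul]
    have htaylor := abs_sub_taylor_sum_le hF hB x (x - h * u)
    rw [hdist, mul_pow] at htaylor
    calc |R u| ≤ |K u| * (B * (|h| ^ (n + 1) * |u| ^ (n + 1)) / (n + 1).factorial) := by
          rw [abs_mul]; exact mul_le_mul_of_nonneg_left htaylor (abs_nonneg _)
      _ = B * |h| ^ (n + 1) / (n + 1).factorial * (|u| ^ (n + 1) * |K u|) := by ring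
  have hRint : Integrable R := (hKmom.const_mul _).mono' (by fun_prop) (ae_of_all _ hR)
  have hpoly : Integrable fun u => ∑ j ∈ Finset.range (n + 1), c j * (u ^ j * K u) :=
    integrable_finsetSum _ fun j hj => (integrable_pow_mul_of_integrable_abs_pow_mul hK hKmom
      (by simp at hj; omega)).const_mul _
  calc |kernelSmoothing K h F x - F x| = |∫ u, R u| := by
        rw [kernelSmoothing, hdecomp, integral_add hpoly hRint,
          integral_sum_mul_pow_mul_eq hK hKunit hKorth hKmom]
        simp [c]
    _ ≤ ∫ u, |R u| := abs_integral_le_integral_abs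
    _ ≤ ∫ u, B * |h| ^ (n + 1) / (n + 1).factorial * (|u| ^ (n + 1) * |K u|) :=
        integral_mono_of_nonneg (ae_of_all _ fun u => abs_nonneg _) (hKmom.const_mul _)
          (ae_of_all _ hR)
    _ = B * (∫ u, |u| ^ (n + 1) * |K u|) / (n + 1).factorial * |h| ^ (n + 1) := by
        rw [integral_const_mul]; ring

theorem abs_kernelSmoothing_sub_inv_mul_sub_le {G : ℝ → ℝ} {B δ c : ℝ} (hK : Integrable K)
    (hKunit : ∫ u, K u = 1) (hKorth : ∀ j : ℕ, 1 ≤ j → j ≤ n → ∫ u, u ^ j * K u = 0)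
    (hKmom : Integrable fun u => |u| ^ (n + 1) * |K u|)
    (hF : ContDiff ℝ (n + 1) F) (hFB : ∀ t, |iteratedDeriv (n + 1) F t| ≤ B)
    (hG : ContDiff ℝ (n + 1) G) (hGB : ∀ t, |iteratedDeriv (n + 1) G t| ≤ B)
    (hδ : 0 < δ) (hc : δ ≤ c) (h x : ℝ) :
    |(kernelSmoothing K h F x - c⁻¹ * kernelSmoothing K h G x) - (F x - c⁻¹ * G x)|
      ≤ (1 + δ⁻¹) * (B * (∫ u, |u| ^ (n + 1) * |K u|) / (n + 1).factorial * |h| ^ (n + 1)) := by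
  convert abs_sub_inv_mul_le hδ hc (abs_kernelSmoothing_sub_le hK hKunit hKorth hKmom hF hFB h x)
    (abs_kernelSmoothing_sub_le hK hKunit hKorth hKmom hG hGB h x) using 2
  ring

end KernelSmoothing

section WeightedIntegrals

variable {α : Type*} [MeasurableSpace α] {μ : Measure α}

theorem integrable_abs_mul_of_integrable_sq_mul {f q : α → ℝ} (hf : AEStronglyMeasurable f μ)
    (hq : Integrable q μ) (hq0 : ∀ x, 0 ≤ q x) (hfq : Integrable (fun x => f x ^ 2 * q x) μ) :
    Integrable (fun x => |f x| * q x) μ := by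
  refine (hfq.add hq).mono' (by fun_prop) (ae_of_all _ fun x => ?_)
  rw [Real.norm_eq_abs, abs_of_nonneg (mul_nonneg (abs_nonneg _) (hq0 x)), Pi.add_apply]
  nlinarith [hq0 x, sq_abs (f x), mul_nonneg (sq_nonneg (|f x| - 1)) (hq0 x)]

theorem integral_abs_mul_le_sqrt_integral_sq_mul {f q : α → ℝ} (hf : AEStronglyMeasurable f μ)
    (hq0 : ∀ x, 0 ≤ q x) (hq1 : ∫ x, q x ∂μ = 1)
    (hfq : Integrable (fun x => f x ^ 2 * q x) μ) :
    ∫ x, |f x| * q x ∂μ ≤ Real.sqrt (∫ x, f x ^ 2 * q x ∂μ) := by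
  have hq : Integrable q μ := Integrable.of_integral_ne_zero (by rw [hq1]; exact one_ne_zero)
  have hfq' := integrable_abs_mul_of_integrable_sq_mul hf hq hq0 hfq
  set c := ∫ x, |f x| * q x ∂μ
  -- the variance of `|f|` under the probability density `q` is nonnegative
  have hvar : 0 ≤ ∫ x, f x ^ 2 * q x ∂μ - c ^ 2 := by
    have hexp : ∫ x, (|f x| - c) ^ 2 * q x ∂μ = ∫ x, f x ^ 2 * q x ∂μ - c ^ 2 := by
      have hsplit : (fun x => (|f x| - c) ^ 2 * q x)
          = fun x => f x ^ 2 * q x - 2 * c * (|f x| * q x) + c ^ 2 * q x := by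
        ext x; rw [sub_sq, sq_abs]; ring
      have hfirst : Integrable (fun x => f x ^ 2 * q x - 2 * c * (|f x| * q x)) μ :=
        hfq.sub (hfq'.const_mul _)
      rw [hsplit, integral_add hfirst (hq.const_mul _), integral_sub hfq (hfq'.const_mul _),
        integral_const_mul, integral_const_mul, hq1]
      ring
    rw [← hexp]
    exact integral_nonneg fun x => mul_nonneg (sq_nonneg _) (hq0 x)
  exact Real.le_sqrt_of_sq_le (by linarith)

theorem abs_integral_mul_sub_integral_mul_le {φ ψ s : α → ℝ} {ε : ℝ}
    (hφ : AEStronglyMeasurable φ μ) (hψ : AEStronglyMeasurable ψ μ)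
    (hψs : Integrable (fun x => ψ x * s x) μ) (hs : Integrable s μ)
    (hε : ∀ x, |φ x - ψ x| ≤ ε) :
    |∫ x, φ x * s x ∂μ - ∫ x, ψ x * s x ∂μ| ≤ ε * ∫ x, |s x| ∂μ := by
  have hdiff : Integrable (fun x => (φ x - ψ x) * s x) μ :=
    hs.bdd_mul (hφ.sub hψ) (ae_of_all _ hε)
  have hφs : Integrable (fun x => φ x * s x) μ := by
    refine (hdiff.add hψs).congr (ae_of_all _ fun x => ?_)
    simp only [Pi.add_apply]
    ring
  calc |∫ x, φ x * s x ∂μ - ∫ x, ψ x * s x ∂μ| = |∫ x, (φ x - ψ x) * s x ∂μ| := by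
        rw [← integral_sub hφs hψs]; simp only [sub_mul]
    _ ≤ ∫ x, |(φ x - ψ x) * s x| ∂μ := abs_integral_le_integral_abs
    _ ≤ ∫ x, ε * |s x| ∂μ := by
        refine integral_mono_of_nonneg (ae_of_all _ fun x => abs_nonneg _)
          (hs.abs.const_mul _) (ae_of_all _ fun x => ?_)
        dsimp only
        rw [abs_mul]
        exact mul_le_mul_of_nonneg_right (hε x) (abs_nonneg _)
    _ = ε * ∫ x, |s x| ∂μ := integral_const_mul _ _

theorem abs_integral_mul_sub_integral_mul_le_mul_sqrt {φ ψ s f q : α → ℝ} {ε M C : ℝ}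
    (hφ : AEStronglyMeasurable φ μ) (hψ : AEStronglyMeasurable ψ μ) (hψM : ∀ x, |ψ x| ≤ M)
    (hε0 : 0 ≤ ε) (hε : ∀ x, |φ x - ψ x| ≤ ε) (hs : AEStronglyMeasurable s μ) (hC : 0 ≤ C)
    (hsf : ∀ x, |s x| ≤ C * (|f x| * q x)) (hf : AEStronglyMeasurable f μ)
    (hq0 : ∀ x, 0 ≤ q x) (hq1 : ∫ x, q x ∂μ = 1) (hfq : Integrable (fun x => f x ^ 2 * q x) μ) :
    |∫ x, φ x * s x ∂μ - ∫ x, ψ x * s x ∂μ|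
      ≤ ε * C * Real.sqrt (∫ x, f x ^ 2 * q x ∂μ) := by
  have hq : Integrable q μ := Integrable.of_integral_ne_zero (by rw [hq1]; exact one_ne_zero)
  have hfq' := (integrable_abs_mul_of_integrable_sq_mul hf hq hq0 hfq).const_mul C
  have hsint : Integrable s μ := hfq'.mono' hs (ae_of_all _ hsf)
  have hsL1 : ∫ x, |s x| ∂μ ≤ C * Real.sqrt (∫ x, f x ^ 2 * q x ∂μ) := by
    calc ∫ x, |s x| ∂μ ≤ ∫ x, C * (|f x| * q x) ∂μ := integral_mono hsint.abs hfq' hsf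
      _ ≤ _ := by
          rw [integral_const_mul]
          gcongr
          exact integral_abs_mul_le_sqrt_integral_sq_mul hf hq0 hq1 hfq
  calc |∫ x, φ x * s x ∂μ - ∫ x, ψ x * s x ∂μ| ≤ ε * ∫ x, |s x| ∂μ :=
        abs_integral_mul_sub_integral_mul_le hφ hψ (hsint.bdd_mul hψ (ae_of_all _ hψM)) hsint hε
    _ ≤ ε * (C * Real.sqrt (∫ x, f x ^ 2 * q x ∂μ)) := by gcongr
    _ = ε * C * Real.sqrt (∫ x, f x ^ 2 * q x ∂μ) := by ring

end WeightedIntegrals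

theorem representation_error_bound_general
    (m₀ : ℕ) (δ : ℝ) (hδ : 0 < δ)
    (q₀ g₀ K : ℝ → ℝ)
    (hq₀nonneg : ∀ w, 0 ≤ q₀ w)
    (hq₀unit : ∫ w, q₀ w = 1)
    (hg₀0 : ∀ w, 0 ≤ g₀ w) (hg₀1 : ∀ w, g₀ w ≤ 1)
    (hq₀smooth : ContDiff ℝ (m₀ + 1 : ℕ) q₀)
    (hgq₀smooth : ContDiff ℝ (m₀ + 1 : ℕ) (fun w => g₀ w * q₀ w))
    (B : ℝ)
    (hq₀deriv : ∀ k ≤ m₀ + 1, ∀ t, |iteratedDeriv k q₀ t| ≤ B)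
    (hgq₀deriv : ∀ k ≤ m₀ + 1, ∀ t,
      |iteratedDeriv k (fun w => g₀ w * q₀ w) t| ≤ B)
    (hKint : Integrable K)
    (hKunit : ∫ u, K u = 1)
    (hKorth : ∀ j : ℕ, 1 ≤ j → j ≤ m₀ → ∫ u, u ^ j * K u = 0)
    (hKmom : Integrable (fun u => |u| ^ (m₀ + 1) * |K u|)) :
    ∃ C : ℝ, ∀ g qW Qbar Qbar0 : ℝ → ℝ,
      Measurable g → Measurable qW → Measurable Qbar → Measurable Qbar0 →
      (∀ w, δ ≤ g w) → (∀ w, δ ≤ qW w) →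
      Integrable (fun w => (Qbar w - Qbar0 w) ^ 2 * q₀ w) →
      ∀ h : ℝ, 0 < h →
        |(2 * ∫ w₁,
            (∫ w₂, (1 / h) * K ((w₁ - w₂) / h) * (1 - g₀ w₂ / g w₁) * q₀ w₂)
              * g₀ w₁ * (Qbar0 w₁ - Qbar w₁) * q₀ w₁ / (g w₁ * qW w₁))
          - 2 * ∫ w, q₀ w * (1 - g₀ w / g w) * g₀ w * (Qbar0 w - Qbar w) * q₀ w
              / (g w * qW w)| ≤
          C * h ^ (m₀ + 1) * Real.sqrt (∫ w, (Qbar w - Qbar0 w) ^ 2 * q₀ w) := by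
  have hq₀B : ∀ t, |q₀ t| ≤ B := by simpa using hq₀deriv 0 (Nat.zero_le _)
  have hgq₀B : ∀ t, |g₀ t * q₀ t| ≤ B := by simpa using hgq₀deriv 0 (Nat.zero_le _)
  have hq₀c := hq₀smooth.continuous
  have hgq₀c := hgq₀smooth.continuous
  set ε := B * (∫ u, |u| ^ (m₀ + 1) * |K u|) / (m₀ + 1).factorial
  refine ⟨2 * (1 + δ⁻¹) * ε * (δ⁻¹ * δ⁻¹), ?_⟩
  intro g qW Qbar Qbar0 hg hqW hQbar hQbar0 hgδ hqWδ hL2 h hh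
  set s := fun w => g₀ w * q₀ w * (Qbar0 w - Qbar w) / (g w * qW w)
  set φ := fun w => kernelSmoothing K h q₀ w
    - (g w)⁻¹ * kernelSmoothing K h (fun y => g₀ y * q₀ y) w
  set ψ := fun w => q₀ w - (g w)⁻¹ * (g₀ w * q₀ w)
  have hAh : ∫ w₁, (∫ w₂, 1 / h * K ((w₁ - w₂) / h) * (1 - g₀ w₂ / g w₁) * q₀ w₂)
      * g₀ w₁ * (Qbar0 w₁ - Qbar w₁) * q₀ w₁ / (g w₁ * qW w₁) = ∫ w, φ w * s w := by
    congr 1 with w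
    rw [integral_rescaled_kernel_mul_one_sub_div_mul hh
      (integrable_kernel_mul_comp hKint hq₀c hq₀B h w)
      (integrable_kernel_mul_comp hKint hgq₀c hgq₀B h w)]
    simp only [φ, s]
    ring
  have hA0 : ∫ w, q₀ w * (1 - g₀ w / g w) * g₀ w * (Qbar0 w - Qbar w) * q₀ w / (g w * qW w)
      = ∫ w, ψ w * s w := by
    congr 1 with w
    have hgw : g w ≠ 0 := (hδ.trans_le (hgδ w)).ne'
    simp only [ψ, s]
    field_simp
  have hφψ (w : ℝ) : |φ w - ψ w| ≤ (1 + δ⁻¹) * (ε * h ^ (m₀ + 1)) := by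
    simpa only [abs_of_pos hh] using abs_kernelSmoothing_sub_inv_mul_sub_le hKint hKunit hKorth
      hKmom hq₀smooth (hq₀deriv _ le_rfl) hgq₀smooth (hgq₀deriv _ le_rfl) hδ (hgδ w) h w
  have hs (w : ℝ) : |s w| ≤ δ⁻¹ * δ⁻¹ * (|Qbar w - Qbar0 w| * q₀ w) := by
    rw [abs_sub_comm]
    exact abs_mul_mul_div_mul_le hδ (hg₀0 w) (hg₀1 w) (hq₀nonneg w) (hgδ w) (hqWδ w)
  have hφ : Measurable φ :=
    (continuous_kernelSmoothing hKint hq₀c hq₀B h).measurable.sub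
      (hg.inv.mul (continuous_kernelSmoothing hKint hgq₀c hgq₀B h).measurable)
  have hψ : Measurable ψ := hq₀c.measurable.sub (hg.inv.mul hgq₀c.measurable)
  have hsm : Measurable s := (hgq₀c.measurable.mul (hQbar0.sub hQbar)).div (hg.mul hqW)
  rw [hAh, hA0, ← mul_sub, abs_mul, abs_two]
  calc 2 * |(∫ w, φ w * s w) - ∫ w, ψ w * s w|
      ≤ 2 * ((1 + δ⁻¹) * (ε * h ^ (m₀ + 1)) * (δ⁻¹ * δ⁻¹)
          * Real.sqrt (∫ w, (Qbar w - Qbar0 w) ^ 2 * q₀ w)) := by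
        gcongr
        exact abs_integral_mul_sub_integral_mul_le_mul_sqrt hφ.aestronglyMeasurable
          hψ.aestronglyMeasurable (fun w => abs_sub_inv_mul_le hδ (hgδ w) (hq₀B w) (hgq₀B w))
          ((abs_nonneg _).trans (hφψ 0)) hφψ hsm.aestronglyMeasurable (by positivity) hs
          (hQbar.sub hQbar0).aestronglyMeasurable hq₀nonneg hq₀unit hL2
    _ = _ := by ring

/-- **Deterministic representation-error bound for the kernel-smoothed
second-order term (univariate covariate).**
With `q₀` a compactly supported probability density, `g₀ : ℝ → [0,1]`, `q₀` and
`g₀·q₀` being `(m₀+1)`-times continuously differentiable with derivatives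
bounded by `B`, and `K` a kernel of order `m₀`, there is a constant `C`
(depending only on `δ`, `m₀`, `K` and the bound `B` on the derivatives of `q₀`
and `g₀·q₀`) such that for all measurable `g, qW ≥ δ`, measurable `Qbar, Qbar0`
with `Qbar − Qbar0 ∈ L²(q₀)`, and all `h > 0`, the kernel-smoothed second-order
term
`A_h := 2∫ [∫ (1/h)·K((w₁−w₂)/h)·(1 − g₀(w₂)/g(w₁))·q₀(w₂) dw₂]·g₀(w₁)·(Qbar0(w₁) − Qbar(w₁))·q₀(w₁)/(g(w₁)·qW(w₁)) dw₁`
and its small-bandwidth limit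
`A₀ := 2∫ q₀(w)·(1 − g₀(w)/g(w))·g₀(w)·(Qbar0(w) − Qbar(w))·q₀(w)/(g(w)·qW(w)) dw`
satisfy `|A_h − A₀| ≤ C·h^{m₀+1}·‖Qbar − Qbar0‖_{L²(q₀)}`. -/
theorem representation_error_bound
    (m₀ : ℕ) (δ : ℝ) (hδ : 0 < δ)
    (q₀ g₀ K : ℝ → ℝ)
    (hq₀nonneg : ∀ w, 0 ≤ q₀ w)
    (hq₀supp : HasCompactSupport q₀)
    (hq₀unit : ∫ w, q₀ w = 1)
    (hg₀0 : ∀ w, 0 ≤ g₀ w) (hg₀1 : ∀ w, g₀ w ≤ 1)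
    (hq₀smooth : ContDiff ℝ (m₀ + 1 : ℕ) q₀)
    (hgq₀smooth : ContDiff ℝ (m₀ + 1 : ℕ) (fun w => g₀ w * q₀ w))
    (B : ℝ)
    (hq₀deriv : ∀ k ≤ m₀ + 1, ∀ t, |iteratedDeriv k q₀ t| ≤ B)
    (hgq₀deriv : ∀ k ≤ m₀ + 1, ∀ t,
      |iteratedDeriv k (fun w => g₀ w * q₀ w) t| ≤ B)
    (hKint : Integrable K)
    (hKunit : ∫ u, K u = 1)
    (hKorth : ∀ j : ℕ, 1 ≤ j → j ≤ m₀ → ∫ u, u ^ j * K u = 0)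
    (hKmom : Integrable (fun u => |u| ^ (m₀ + 1) * |K u|)) :
    ∃ C : ℝ, ∀ g qW Qbar Qbar0 : ℝ → ℝ,
      Measurable g → Measurable qW → Measurable Qbar → Measurable Qbar0 →
      (∀ w, δ ≤ g w) → (∀ w, δ ≤ qW w) →
      Integrable (fun w => (Qbar w - Qbar0 w) ^ 2 * q₀ w) →
      ∀ h : ℝ, 0 < h →
        |(2 * ∫ w₁,
            (∫ w₂, (1 / h) * K ((w₁ - w₂) / h) * (1 - g₀ w₂ / g w₁) * q₀ w₂)
              * g₀ w₁ * (Qbar0 w₁ - Qbar w₁) * q₀ w₁ / (g w₁ * qW w₁))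
          - 2 * ∫ w, q₀ w * (1 - g₀ w / g w) * g₀ w * (Qbar0 w - Qbar w) * q₀ w
              / (g w * qW w)| ≤
          C * h ^ (m₀ + 1) * Real.sqrt (∫ w, (Qbar w - Qbar0 w) ^ 2 * q₀ w) :=
  representation_error_bound_general m₀ δ hδ q₀ g₀ K hq₀nonneg hq₀unit hg₀0 hg₀1 hq₀smooth
    hgq₀smooth B hq₀deriv hgq₀deriv hKint hKunit hKorth hKmom
end

section
/- The remainder R₃ is third order: define R₃(P,P₀) := ∫ (1 − g₀(w)·q₀(w)/(g(w)·q_W(w)))·(1 − g₀(w)/g(w))·(Q̄(w) − Q̄₀(w)) dQ_{W,0}(w). If g(w) ≥ δ and g(w)·q_W(w) ≥ δ′ for all w, then |R₃(P,P₀)| ≤ (1/(δ·δ′))·‖g·q_W − g₀·q₀‖_{L⁴(Q_{W,0})}·‖g − g₀‖_{L⁴(Q_{W,0})}·‖Q̄ − Q̄₀‖_{L²(Q_{W,0})}. -/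
/-!
Since `1 - g₀q₀/(g qW) = (g qW - g₀q₀)/(g qW)` and `1 - g₀/g = (g - g₀)/g`, the lower bounds on
the denominators dominate the integrand pointwise by `(δδ')⁻¹ |A B C|` with `A = g qW - g₀q₀`,
`B = g - g₀`, `C = Qbar - Qbar0`; Hölder's inequality, applied twice (`1/2 = 1/4 + 1/4` and
`1 = 1/2 + 1/2`), bounds `∫ |A B C|` by `‖A‖₄ ‖B‖₄ ‖C‖₂`.
-/

open MeasureTheory ENNReal

instance instHolderTripleFourFourTwo : HolderTriple (4 : ℝ≥0∞) 4 2 where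
  inv_add_inv_eq_inv := by
    rw [← two_mul, show (4 : ℝ≥0∞) = 2 * 2 by norm_num, ENNReal.mul_inv (by simp) (by simp),
      ← mul_assoc, ENNReal.mul_inv_cancel (by simp) (by simp), one_mul]

section Holder

variable {α : Type*} [MeasurableSpace α] {μ : Measure α}

theorem eLpNorm_mul_mul_le {𝕜 : Type*} [NormedRing 𝕜] {f g h : α → 𝕜} {p q r s t : ℝ≥0∞}
    [HolderTriple p q s] [HolderTriple s r t] (hf : AEStronglyMeasurable f μ)
    (hg : AEStronglyMeasurable g μ) (hh : AEStronglyMeasurable h μ) :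
    eLpNorm (f * g * h) t μ ≤ eLpNorm f p μ * eLpNorm g q μ * eLpNorm h r μ := by
  have hfg_h := eLpNorm_smul_le_mul_eLpNorm (p := s) (q := r) (r := t) hh (hf.mul hg)
  have hf_g := eLpNorm_smul_le_mul_eLpNorm (p := p) (q := q) (r := s) hg hf
  exact hfg_h.trans (mul_le_mul_left hf_g _)

variable {f g h : α → ℝ}

theorem MemLp.toReal_eLpNorm_eq_integral_abs_pow {n : ℕ} (hn : n ≠ 0) (hf : MemLp f n μ) :
    (eLpNorm f n μ).toReal = (∫ x, |f x| ^ n ∂μ) ^ (1 / (n : ℝ)) := by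
  rw [hf.eLpNorm_eq_integral_rpow_norm (by simpa using hn) (by simp),
    ENNReal.toReal_ofReal (by positivity)]
  simp [Real.norm_eq_abs]

theorem integral_abs_mul_mul_le (hf : MemLp f 4 μ) (hg : MemLp g 4 μ) (hh : MemLp h 2 μ) :
    ∫ x, |f x * g x * h x| ∂μ ≤
      (∫ x, |f x| ^ 4 ∂μ) ^ (1 / 4 : ℝ) * (∫ x, |g x| ^ 4 ∂μ) ^ (1 / 4 : ℝ)
        * (∫ x, h x ^ 2 ∂μ) ^ (1 / 2 : ℝ) := by
  have hfgh : MemLp (f * g * h) 1 μ := hh.mul (hg.mul (r := 2) hf)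
  have hHolder : eLpNorm (f * g * h) 1 μ ≤ eLpNorm f 4 μ * eLpNorm g 4 μ * eLpNorm h 2 μ :=
    eLpNorm_mul_mul_le (s := 2) hf.1 hg.1 hh.1
  have h1 := MemLp.toReal_eLpNorm_eq_integral_abs_pow (n := 1) one_ne_zero (by simpa using hfgh)
  have h4f := MemLp.toReal_eLpNorm_eq_integral_abs_pow (n := 4) four_ne_zero (by simpa using hf)
  have h4g := MemLp.toReal_eLpNorm_eq_integral_abs_pow (n := 4) four_ne_zero (by simpa using hg)
  have h2h := MemLp.toReal_eLpNorm_eq_integral_abs_pow (n := 2) two_ne_zero (by simpa using hh)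
  simp only [Nat.cast_one, Nat.cast_ofNat, pow_one, div_one, Real.rpow_one, Pi.mul_apply,
    sq_abs] at h1 h4f h4g h2h
  have := ENNReal.toReal_mono (by finiteness) hHolder
  rwa [ENNReal.toReal_mul, ENNReal.toReal_mul, h1, h4f, h4g, h2h] at this

end Holder

theorem abs_one_sub_div_le {a b δ : ℝ} (hδ : 0 < δ) (hb : δ ≤ b) :
    |1 - a / b| ≤ |b - a| / δ := by
  have hb0 : 0 < b := hδ.trans_le hb
  rw [one_sub_div hb0.ne', abs_div, abs_of_pos hb0]
  exact div_le_div_of_nonneg_left (abs_nonneg _) hδ hb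

theorem remainder_R3_third_order_general
    {W : Type*} [MeasurableSpace W]
    (QW0 : Measure W)
    (g g₀ qW q₀ Qbar Qbar0 : W → ℝ) (δ δ' : ℝ) (hδ : 0 < δ) (hδ' : 0 < δ')
    (hgq : MemLp (fun w => g w * qW w - g₀ w * q₀ w) 4 QW0)
    (hgg : MemLp (fun w => g w - g₀ w) 4 QW0)
    (hQQ : MemLp (fun w => Qbar w - Qbar0 w) 2 QW0)
    (hgδ : ∀ w, δ ≤ g w) (hgqδ : ∀ w, δ' ≤ g w * qW w) :
    |∫ w, (1 - g₀ w * q₀ w / (g w * qW w)) * (1 - g₀ w / g w)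
        * (Qbar w - Qbar0 w) ∂QW0| ≤
      (1 / (δ * δ'))
        * (∫ w, |g w * qW w - g₀ w * q₀ w| ^ (4 : ℕ) ∂QW0) ^ ((1 : ℝ) / 4)
        * (∫ w, |g w - g₀ w| ^ (4 : ℕ) ∂QW0) ^ ((1 : ℝ) / 4)
        * (∫ w, (Qbar w - Qbar0 w) ^ (2 : ℕ) ∂QW0) ^ ((1 : ℝ) / 2) := by
  set A := fun w => g w * qW w - g₀ w * q₀ w
  set B := fun w => g w - g₀ w
  set C := fun w => Qbar w - Qbar0 w
  have hbound : ∀ w, ‖(1 - g₀ w * q₀ w / (g w * qW w)) * (1 - g₀ w / g w) * C w‖ ≤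
      1 / (δ * δ') * |A w * B w * C w| := fun w =>
    calc _ = |1 - g₀ w * q₀ w / (g w * qW w)| * |1 - g₀ w / g w| * |C w| := by
          simp only [Real.norm_eq_abs, abs_mul]
      _ ≤ |A w| / δ' * (|B w| / δ) * |C w| := by
          gcongr
          · exact abs_one_sub_div_le hδ' (hgqδ w)
          · exact abs_one_sub_div_le hδ (hgδ w)
      _ = 1 / (δ * δ') * |A w * B w * C w| := by
          rw [abs_mul, abs_mul]
          field_simp
  have hABC : Integrable (fun w => |A w * B w * C w|) QW0 :=
    (memLp_one_iff_integrable.mp (hQQ.mul (r := 1) (hgg.mul (r := 2) hgq))).abs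
  calc _ ≤ ∫ w, 1 / (δ * δ') * |A w * B w * C w| ∂QW0 :=
        norm_integral_le_of_norm_le (hABC.const_mul _) (.of_forall hbound)
    _ = 1 / (δ * δ') * ∫ w, |A w * B w * C w| ∂QW0 := integral_const_mul _ _
    _ ≤ _ := by
        grw [integral_abs_mul_mul_le hgq hgg hQQ, ← mul_assoc, ← mul_assoc]

/-- **The remainder `R₃` is third order.**
With `R₃ := ∫ (1 − g₀·q₀/(g·qW))·(1 − g₀/g)·(Qbar − Qbar0) dQW0`, if
`g ≥ δ` and `g·qW ≥ δ′` everywhere, then by the generalized Hölder inequality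
with exponents `(4,4,2)`,
`|R₃| ≤ (1/(δ·δ′))·‖g·qW − g₀·q₀‖_{L⁴}·‖g − g₀‖_{L⁴}·‖Qbar − Qbar0‖_{L²}`,
where `‖f‖_{L^p(QW0)}^p := ∫ |f|^p dQW0`. -/
theorem remainder_R3_third_order
    {W : Type*} [MeasurableSpace W]
    (QW0 : Measure W) [IsProbabilityMeasure QW0]
    (g g₀ qW q₀ Qbar Qbar0 : W → ℝ) (δ δ' : ℝ) (hδ : 0 < δ) (hδ' : 0 < δ')
    (hgmeas : Measurable g) (hg₀meas : Measurable g₀)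
    (hqWmeas : Measurable qW) (hq₀meas : Measurable q₀)
    (hQbarmeas : Measurable Qbar) (hQbar0meas : Measurable Qbar0)
    (hgq : MemLp (fun w => g w * qW w - g₀ w * q₀ w) 4 QW0)
    (hgg : MemLp (fun w => g w - g₀ w) 4 QW0)
    (hQQ : MemLp (fun w => Qbar w - Qbar0 w) 2 QW0)
    (hgδ : ∀ w, δ ≤ g w) (hgqδ : ∀ w, δ' ≤ g w * qW w) :
    |∫ w, (1 - g₀ w * q₀ w / (g w * qW w)) * (1 - g₀ w / g w)
        * (Qbar w - Qbar0 w) ∂QW0| ≤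
      (1 / (δ * δ'))
        * (∫ w, |g w * qW w - g₀ w * q₀ w| ^ (4 : ℕ) ∂QW0) ^ ((1 : ℝ) / 4)
        * (∫ w, |g w - g₀ w| ^ (4 : ℕ) ∂QW0) ^ ((1 : ℝ) / 4)
        * (∫ w, (Qbar w - Qbar0 w) ^ (2 : ℕ) ∂QW0) ^ ((1 : ℝ) / 2) :=
  remainder_R3_third_order_general QW0 g g₀ qW q₀ Qbar Qbar0 δ δ' hδ hδ' hgq hgg hQQ hgδ hgqδ
end
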